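/- arXiv:2001.06744 — 2 statements merged into one kernel-verified Lean document; each statement's English description precedes it below -/
import Mathlib

section
/- For a finite set X, a statistic T : X → ℝᵗ and θ, θ' ∈ ℝᵗ, the Bregman divergence of the log-partition function equals the Kullback–Leibler divergence of the corresponding exponential family distributions: F(θ) − F(θ') − ⟨θ − θ', ∇F(θ')⟩ = Σ_{x∈X} P_{θ'}(x) log( P_{θ'}(x) / P_θ(x) ). -/
open scoped RealInnerProductSpace BigOperators

/-!
The gradient of the log-partition function `F` at `θ'` is the mean `∑ₓ P_{θ'}(x) T(x)` of the
statistic. Since `log P_ϑ(x) = ⟪T x, ϑ⟫ - F ϑ`, the log-likelihood ratio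
`log (P_{θ'}(x) / P_θ(x))` equals `F θ - F θ' - ⟪T x, θ - θ'⟫`, and averaging it against
`P_{θ'}` gives exactly the Bregman divergence.
-/

namespace ExpFamily

variable {X E : Type*} [Fintype X] [NormedAddCommGroup E] [InnerProductSpace ℝ E]

noncomputable def partitionFunction (T : X → E) (θ : E) : ℝ := ∑ x, Real.exp ⟪T x, θ⟫

noncomputable def logPartition (T : X → E) (θ : E) : ℝ := Real.log (partitionFunction T θ)

noncomputable def density (T : X → E) (θ : E) (x : X) : ℝ :=
  Real.exp ⟪T x, θ⟫ / partitionFunction T θ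

variable (T : X → E)

theorem hasFDerivAt_partitionFunction (θ : E) :
    HasFDerivAt (partitionFunction T) (∑ x, Real.exp ⟪T x, θ⟫ • innerSL ℝ (T x)) θ :=
  HasFDerivAt.fun_sum fun x _ => ((innerSL ℝ (T x)).hasFDerivAt (x := θ)).exp

variable [Nonempty X]

theorem partitionFunction_pos (θ : E) : 0 < partitionFunction T θ :=
  Finset.sum_pos (fun _ _ => Real.exp_pos _) Finset.univ_nonempty

theorem density_pos (θ : E) (x : X) : 0 < density T θ x :=
  div_pos (Real.exp_pos _) (partitionFunction_pos T θ)

theorem sum_density (θ : E) : ∑ x, density T θ x = 1 := by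
  simp only [density, ← Finset.sum_div]
  exact div_self (partitionFunction_pos T θ).ne'

theorem log_density (θ : E) (x : X) :
    Real.log (density T θ x) = ⟪T x, θ⟫ - logPartition T θ := by
  rw [density, Real.log_div (Real.exp_ne_zero _) (partitionFunction_pos T θ).ne', Real.log_exp,
    logPartition]

theorem hasGradientAt_logPartition [CompleteSpace E] (θ : E) :
    HasGradientAt (logPartition T) (∑ x, density T θ x • T x) θ := by
  rw [hasGradientAt_iff_hasFDerivAt]
  refine ((hasFDerivAt_partitionFunction T θ).log (partitionFunction_pos T θ).ne').congr_fderiv ?_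
  ext y
  simp only [InnerProductSpace.toDual_apply_apply, sum_inner, real_inner_smul_left,
    smul_apply, sum_apply, innerSL_apply_apply,
    Finset.smul_sum, smul_eq_mul, density, div_eq_inv_mul]
  exact Finset.sum_congr rfl fun x _ => by ring

theorem log_density_div_density (θ θ' : E) (x : X) :
    Real.log (density T θ' x / density T θ x) =
      logPartition T θ - logPartition T θ' - ⟪T x, θ - θ'⟫ := by
  rw [Real.log_div (density_pos T θ' x).ne' (density_pos T θ x).ne', log_density, log_density,
    inner_sub_right]
  ring

theorem logPartition_bregman_eq_sum_mul_log (θ θ' : E) :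
    logPartition T θ - logPartition T θ' - ⟪θ - θ', ∑ x, density T θ' x • T x⟫ =
      ∑ x, density T θ' x * Real.log (density T θ' x / density T θ x) := by
  simp only [log_density_div_density, mul_sub, Finset.sum_sub_distrib, ← Finset.sum_mul,
    sum_density, one_mul, inner_sum, real_inner_smul_right, real_inner_comm (θ - θ')]

end ExpFamily

/-- The Bregman divergence of the log-partition function of a finite linear
exponential family equals the Kullback–Leibler divergence of the corresponding
distributions: `F(θ) − F(θ') − ⟨θ − θ', ∇F(θ')⟩ = Σ_x P_{θ'}(x) log(P_{θ'}(x)/P_θ(x))`. -/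
theorem bregman_eq_kl {X : Type*} [Fintype X] [Nonempty X]
    {t : ℕ} (T : X → EuclideanSpace ℝ (Fin t)) (θ θ' g : EuclideanSpace ℝ (Fin t))
    (F : EuclideanSpace ℝ (Fin t) → ℝ)
    (hF : F = fun ϑ => Real.log (∑ x : X, Real.exp ⟪T x, ϑ⟫))
    (P : EuclideanSpace ℝ (Fin t) → X → ℝ)
    (hP : P = fun ϑ x => Real.exp ⟪T x, ϑ⟫ / ∑ x' : X, Real.exp ⟪T x', ϑ⟫)
    (hg : HasGradientAt F g θ') :
    F θ - F θ' - ⟪θ - θ', g⟫ = ∑ x : X, P θ' x * Real.log (P θ' x / P θ x) := by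
  obtain rfl : F = ExpFamily.logPartition T := hF
  obtain rfl : P = ExpFamily.density T := hP
  rw [hg.unique (ExpFamily.hasGradientAt_logPartition T θ')]
  exact ExpFamily.logPartition_bregman_eq_sum_mul_log T θ θ'
end

section
/- The β*-block of the dual-coordinate gradient: let X be a finite set, T : X → ℝᵗ, s ≥ 1, x ∈ X, and consider the function h_i(a, β*) = log a_i + ⟨T(x), θ_i⟩ − log Σ_{x'∈X} exp(⟨T(x'), θ_i⟩) with θ_i = β*_i / a_i, defined for a ∈ (ℝ_{>0})ˢ and β* : Fin s → ℝᵗ. Then for all i, k ∈ Fin s: the gradient of h_i with respect to β*_k equals 0 if k ≠ i, and equals (1/a_k)·(T(x) − E_{θ_k}[T]) if k = i, where E_{θ}[T] = Σ_{x'} T(x') exp(⟨T(x'),θ⟩)/Σ_{x'} exp(⟨T(x'),θ⟩); that is, ∇_{β*_k} h(x,η*) = (1/P(Y=k)) · ∇_{θ_k} log P_{θ_k}(x | Y=k) concentrated in the k-th component. -/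
open scoped RealInnerProductSpace

/-!
The map `β* ↦ h i a β*` only reads the block `β* i`, so every other block has zero gradient.
On the block `β* i` it is the log-likelihood `θ ↦ ⟨T x, θ⟩ - log Z(θ)` of the exponential family,
precomposed with `θ = (a i)⁻¹ • β* i`; the gradient of the log-partition function `log Z` is the
mean `E_θ[T]`, and the chain rule through the scaling contributes the factor `(a i)⁻¹`.
-/

open InnerProductSpace

section ExponentialFamily

variable {X E : Type*} [Fintype X] [NormedAddCommGroup E] [InnerProductSpace ℝ E]

noncomputable def logPartition (T : X → E) (θ : E) : ℝ :=
  Real.log (∑ x, Real.exp ⟪T x, θ⟫)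

noncomputable def meanStat (T : X → E) (θ : E) : E :=
  ∑ x, (Real.exp ⟪T x, θ⟫ / ∑ y, Real.exp ⟪T y, θ⟫) • T x

theorem sum_exp_inner_pos [Nonempty X] (T : X → E) (θ : E) :
    0 < ∑ x, Real.exp ⟪T x, θ⟫ :=
  Finset.sum_pos (fun _ _ => Real.exp_pos _) Finset.univ_nonempty

variable [CompleteSpace E]

theorem hasGradientAt_logPartition [Nonempty X] (T : X → E) (θ : E) :
    HasGradientAt (logPartition T) (meanStat T θ) θ := by
  have hsum : HasFDerivAt (fun θ => ∑ x, Real.exp ⟪T x, θ⟫)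
      (∑ x, Real.exp ⟪T x, θ⟫ • toDual ℝ E (T x)) θ :=
    HasFDerivAt.fun_sum fun x _ => (toDual ℝ E (T x)).hasFDerivAt.exp
  rw [hasGradientAt_iff_hasFDerivAt]
  refine (hsum.log (sum_exp_inner_pos T θ).ne').congr_fderiv ?_
  ext v
  simp only [meanStat, map_sum, map_smul, smul_apply, sum_apply, toDual_apply_apply, smul_eq_mul,
    Finset.mul_sum, div_eq_inv_mul, mul_assoc]

theorem hasGradientAt_logLikelihood (T : X → E) (x : X) (θ : E) :
    HasGradientAt (fun θ => ⟪T x, θ⟫ - logPartition T θ) (T x - meanStat T θ) θ := by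
  have : Nonempty X := ⟨x⟩
  rw [hasGradientAt_iff_hasFDerivAt, map_sub]
  exact (toDual ℝ E (T x)).hasFDerivAt.sub
    (hasGradientAt_iff_hasFDerivAt.mp (hasGradientAt_logPartition T θ))

end ExponentialFamily

section Gradient

variable {E : Type*} [NormedAddCommGroup E] [InnerProductSpace ℝ E] [CompleteSpace E]
  {f : E → ℝ} {g b : E}

theorem HasGradientAt.const_add (hf : HasGradientAt f g b) (C : ℝ) :
    HasGradientAt (fun b => C + f b) g b :=
  hasGradientAt_iff_hasFDerivAt.mpr ((hasGradientAt_iff_hasFDerivAt.mp hf).const_add C)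

theorem HasGradientAt.comp_const_smul {c : ℝ} (hf : HasGradientAt f g (c • b)) :
    HasGradientAt (fun b => f (c • b)) (c • g) b := by
  rw [hasGradientAt_iff_hasFDerivAt] at hf ⊢
  refine (hf.comp b ((hasFDerivAt_id b).const_smul c)).congr_fderiv ?_
  ext v
  simp only [ContinuousLinearMap.comp_smulₛₗ, Real.ringHom_apply, ContinuousLinearMap.comp_id,
    smul_apply, toDual_apply_apply, smul_eq_mul, map_smul]

end Gradient

theorem dsngd_beta_block_general {X : Type*} [Fintype X]
    {t s : ℕ} (T : X → EuclideanSpace ℝ (Fin t)) (x : X)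
    (a : Fin s → ℝ)
    (βs : Fin s → EuclideanSpace ℝ (Fin t))
    (h : Fin s → (Fin s → ℝ) → (Fin s → EuclideanSpace ℝ (Fin t)) → ℝ)
    (hh : h = fun i a' b => Real.log (a' i) + ⟪T x, (a' i)⁻¹ • b i⟫
      - Real.log (∑ x' : X, Real.exp ⟪T x', (a' i)⁻¹ • b i⟫))
    (θ : Fin s → EuclideanSpace ℝ (Fin t)) (hθ : θ = fun k => (a k)⁻¹ • βs k)
    (Eθ : Fin s → EuclideanSpace ℝ (Fin t))
    (hEθ : Eθ = fun k => ∑ x' : X,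
      (Real.exp ⟪T x', θ k⟫ / ∑ x'' : X, Real.exp ⟪T x'', θ k⟫) • T x') :
    ∀ i k : Fin s,
      (k ≠ i →
        HasGradientAt (fun bk => h i a (Function.update βs k bk)) 0 (βs k)) ∧
      (k = i →
        HasGradientAt (fun bk => h i a (Function.update βs k bk))
          ((a k)⁻¹ • (T x - Eθ k)) (βs k)) := by
  intro i k
  refine ⟨fun hki => ?_, fun hki => ?_⟩
  · have hconst : (fun bk => h i a (Function.update βs k bk)) = fun _ => h i a βs := by
      funext bk
      simp only [hh, Function.update_of_ne (Ne.symm hki)]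
    rw [hconst]
    exact hasGradientAt_const _ _
  · subst hki
    have hblock : (fun bk => h k a (Function.update βs k bk)) = fun bk =>
        Real.log (a k) + (⟪T x, (a k)⁻¹ • bk⟫ - logPartition T ((a k)⁻¹ • bk)) := by
      funext bk
      simp only [hh, Function.update_self, logPartition, add_sub_assoc]
    have hmean : Eθ k = meanStat T ((a k)⁻¹ • βs k) := by
      simp only [hEθ, hθ, meanStat]
    rw [hblock, hmean]
    exact ((hasGradientAt_logLikelihood T x _).comp_const_smul).const_add _

/-- The `β*`-block of the dual-coordinate gradient: for
`h i a β* = log (a i) + ⟨T x, θ i⟩ − log Σ_{x'} exp⟨T x', θ i⟩` with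
`θ i = (a i)⁻¹ • β* i`, the gradient of `h i` with respect to `β* k` is `0` for
`k ≠ i`, and equals `(a k)⁻¹ • (T x − E_{θ k}[T])` for `k = i`; i.e. the
`β*`-block is concentrated in the `k`-th component with value
`(1/P(Y=k)) • ∇_{θ k} log P_{θ k}(x | Y=k)`. -/
theorem dsngd_beta_block {X : Type*} [Fintype X] [Nonempty X]
    {t s : ℕ} (hs : 1 ≤ s) (T : X → EuclideanSpace ℝ (Fin t)) (x : X)
    (a : Fin s → ℝ) (ha : ∀ k, 0 < a k)
    (βs : Fin s → EuclideanSpace ℝ (Fin t))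
    (h : Fin s → (Fin s → ℝ) → (Fin s → EuclideanSpace ℝ (Fin t)) → ℝ)
    (hh : h = fun i a' b => Real.log (a' i) + ⟪T x, (a' i)⁻¹ • b i⟫
      - Real.log (∑ x' : X, Real.exp ⟪T x', (a' i)⁻¹ • b i⟫))
    (θ : Fin s → EuclideanSpace ℝ (Fin t)) (hθ : θ = fun k => (a k)⁻¹ • βs k)
    (Eθ : Fin s → EuclideanSpace ℝ (Fin t))
    (hEθ : Eθ = fun k => ∑ x' : X,
      (Real.exp ⟪T x', θ k⟫ / ∑ x'' : X, Real.exp ⟪T x'', θ k⟫) • T x') :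
    ∀ i k : Fin s,
      (k ≠ i →
        HasGradientAt (fun bk => h i a (Function.update βs k bk)) 0 (βs k)) ∧
      (k = i →
        HasGradientAt (fun bk => h i a (Function.update βs k bk))
          ((a k)⁻¹ • (T x - Eθ k)) (βs k)) :=
  dsngd_beta_block_general T x a βs h hh θ hθ Eθ hEθ
end
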